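/- Let L ∈ ℤ[x_1^{±1},...,x_n^{±1}] be a Laurent polynomial and let f, g ∈ ℤ[x_1,...,x_n] be polynomials with f·L = g in the Laurent polynomial ring. If f(e_i) ≠ 0 for every i (where e_i has i-th coordinate 0 and all other coordinates 1), then L is a polynomial, i.e. lies in the image of ℤ[x_1,...,x_n] in the Laurent polynomial ring. -/

import Mathlib

/-- The Laurent polynomial ring `ℤ[x₁^{±1},...,xₙ^{±1}]` in `n` variables. -/
abbrev MvLaurent (n : ℕ) : Type := AddMonoidAlgebra ℤ (Fin n →₀ ℤ)

/-- The canonical inclusion of the polynomial ring into the Laurent polynomial ring. -/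
noncomputable def toLaurent (n : ℕ) : MvPolynomial (Fin n) ℤ →+* MvLaurent n :=
  AddMonoidAlgebra.mapDomainRingHom ℤ
    (Finsupp.mapRange.addMonoidHom (Nat.castAddMonoidHom ℤ))

/-- The point `e i = (1,...,1,0,1,...,1)` with `0` in the `i`-th position. -/
def evalPoint (n : ℕ) (i : Fin n) : Fin n → ℤ := fun j => if j = i then 0 else 1

/-!
Multiplying `L` by a suitable monomial `x^a` clears its denominators: `x^a L = toLaurent h` for
a polynomial `h`. Then `f h = x^a g` in the polynomial ring. Since `f(e_i) ≠ 0`, no variable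
`X_i` divides `f`, so `f` is coprime to `x^a` in the factorial ring `ℤ[x_1,...,x_n]`, whence
`x^a ∣ h`, say `h = x^a Q`; cancelling the unit `x^a` in the Laurent ring gives `L = Q`.
-/

open MvPolynomial AddMonoidAlgebra

namespace MvPolynomial

variable {σ R : Type*}

theorem not_X_dvd_of_eval_ne_zero [CommSemiring R] {f : MvPolynomial σ R} {x : σ → R} {i : σ}
    (hx : x i = 0) (hf : eval x f ≠ 0) : ¬ X i ∣ f := by
  rintro ⟨q, rfl⟩
  simp [hx] at hf

theorem monomial_one_dvd_of_dvd_mul [CommRing R] [IsDomain R] [UniqueFactorizationMonoid R]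
    {f h : MvPolynomial σ R} {a : σ →₀ ℕ} (hf : ∀ i, ¬ X i ∣ f)
    (hdvd : monomial a 1 ∣ f * h) : monomial a 1 ∣ h := by
  have hcop : IsRelPrime (monomial a (1 : R)) f := by
    rw [monomial_eq, C_1, one_mul, Finsupp.prod]
    exact IsRelPrime.prod_left fun i _ ↦
      (X_prime.irreducible.isRelPrime_iff_not_dvd.2 (hf i)).pow_left
  exact hcop.dvd_of_dvd_mul_left hdvd

end MvPolynomial

theorem AddMonoidAlgebra.isUnit_single_one {R G : Type*} [Semiring R] [AddGroup G] (d : G) :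
    IsUnit (single d (1 : R)) :=
  (Group.isUnit (Multiplicative.ofAdd d)).map (of R G)

namespace MvLaurent

variable {n : ℕ}

noncomputable abbrev castExponent (n : ℕ) : (Fin n →₀ ℕ) →+ (Fin n →₀ ℤ) :=
  Finsupp.mapRange.addMonoidHom (Nat.castAddMonoidHom ℤ)

theorem toLaurent_injective : Function.Injective (toLaurent n) :=
  mapDomain_injective <| Finsupp.mapRange_injective _ Nat.cast_zero Nat.cast_injective

theorem toLaurent_monomial (a : Fin n →₀ ℕ) (c : ℤ) :
    toLaurent n (monomial a c) = single (castExponent n a) c :=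
  mapDomain_single

theorem exists_toLaurent_eq_single_mul (L : MvLaurent n) :
    ∃ (a : Fin n →₀ ℕ) (h : MvPolynomial (Fin n) ℤ),
      toLaurent n h = single (castExponent n a) 1 * L := by
  induction L using AddMonoidAlgebra.induction_linear with
  | zero => exact ⟨0, 0, by simp⟩
  | add L M hL hM =>
    obtain ⟨a, h, hh⟩ := hL
    obtain ⟨b, k, hk⟩ := hM
    refine ⟨a + b, monomial b 1 * h + monomial a 1 * k, ?_⟩
    simp only [map_add, map_mul, toLaurent_monomial, hh, hk, mul_add, ← mul_assoc,
      single_mul_single, one_mul, add_comm (castExponent n b)]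
  | single d c =>
    -- `d = d⁺ - d⁻`, with `d⁺` and `d⁻` taken coordinatewise
    refine ⟨d.mapRange (fun z ↦ (-z).toNat) (by simp),
      monomial (d.mapRange Int.toNat Int.toNat_zero) c, ?_⟩
    rw [toLaurent_monomial, single_mul_single, one_mul]
    congr 1
    ext j
    simp
    omega

end MvLaurent

open MvLaurent in
theorem stmt8 {n : ℕ} (L : MvLaurent n) (f g : MvPolynomial (Fin n) ℤ)
    (hfg : toLaurent n f * L = toLaurent n g)
    (hf : ∀ i : Fin n, MvPolynomial.eval (evalPoint n i) f ≠ 0) :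
    ∃ Q : MvPolynomial (Fin n) ℤ, toLaurent n Q = L := by
  have hfX : ∀ i, ¬ X i ∣ f := fun i ↦ not_X_dvd_of_eval_ne_zero (by simp [evalPoint]) (hf i)
  obtain ⟨a, h, hh⟩ := exists_toLaurent_eq_single_mul L
  have hpoly : f * h = monomial a 1 * g := toLaurent_injective <| by
    rw [map_mul, map_mul, toLaurent_monomial, hh, mul_left_comm, hfg]
  obtain ⟨Q, rfl⟩ := monomial_one_dvd_of_dvd_mul hfX ⟨g, hpoly⟩
  refine ⟨Q, (isUnit_single_one (castExponent n a)).mul_left_cancel ?_⟩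
  rw [← hh, map_mul, toLaurent_monomial]
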